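/- arXiv:1610.04850 — 2 statements merged into one kernel-verified Lean document; each statement's English description precedes it below -/
import Mathlib

section
/- Let Q be a real f×m matrix of rank f, let k : {1,…,L₀} → {1,…,m} be an injective choice of column indices with m ≥ L₀ ≥ 2f, and let S = Q(:,k) with S Sᵀ invertible. Assume S is dominant: for every column index i of Q and every j ∈ {1,…,L₀}, replacing the j-th column of S by the i-th column qᵢ of Q yields a matrix S⁽ʲ←ⁱ⁾ with det(S⁽ʲ←ⁱ⁾ (S⁽ʲ←ⁱ⁾)ᵀ) ≤ det(S Sᵀ). Then for every column index i of Q not in the range of k, the least-norm coefficient vector cᵢ = Sᵀ(S Sᵀ)⁻¹ qᵢ satisfies ‖cᵢ‖₂ ≤ √(f/(f+1)) < 1. -/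
/-!
Write `A = S Sᵀ`, `α = qᵀ A⁻¹ q = ‖S† q‖²`, `γⱼ = sⱼᵀ A⁻¹ sⱼ` and `cⱼ = sⱼᵀ A⁻¹ q`. Replacing the
column `sⱼ` by `q` is the rank-two update `A ↦ A + q qᵀ - sⱼ sⱼᵀ`, which multiplies the
determinant by `(1 + α)(1 - γⱼ) + cⱼ²`. Dominance makes this factor at most `1`, i.e.
`cⱼ² ≤ γⱼ (1 + α) - α`. Summing over `j`, with `∑ γⱼ = tr (A⁻¹ S Sᵀ) = f`, gives
`α ≤ f (1 + α) - L₀ α`, hence `α (L₀ + 1 - f) ≤ f` and `α ≤ f / (f + 1)` when `L₀ ≥ 2f`.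
-/

open Matrix

namespace Matrix

section CommRing

variable {m n α : Type*} [Fintype n] [CommRing α]

theorem updateCol_mul_transpose_updateCol [DecidableEq n] (S : Matrix m n α) (j : n) (q : m → α) :
    S.updateCol j q * (S.updateCol j q)ᵀ = S * Sᵀ + vecMulVec q q - vecMulVec (Sᵀ j) (Sᵀ j) := by
  ext a b
  simp only [mul_apply, transpose_apply, Matrix.add_apply, Matrix.sub_apply, vecMulVec_apply]
  rw [← Finset.add_sum_erase _ _ (Finset.mem_univ j), ← Finset.add_sum_erase _ _ (Finset.mem_univ j),
    Finset.sum_congr rfl fun t ht => by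
      rw [updateCol_ne (Finset.ne_of_mem_erase ht), updateCol_ne (Finset.ne_of_mem_erase ht)]]
  simp only [updateCol_self]
  ring

variable [Fintype m] [DecidableEq m]

theorem det_add_vecMulVec_sub_vecMulVec {A : Matrix m m α} (hA : IsUnit A.det) (q s : m → α) :
    (A + vecMulVec q q - vecMulVec s s).det =
      A.det * ((1 + q ⬝ᵥ A⁻¹ *ᵥ q) * (1 - s ⬝ᵥ A⁻¹ *ᵥ s) + (q ⬝ᵥ A⁻¹ *ᵥ s) * (s ⬝ᵥ A⁻¹ *ᵥ q)) := by
  have hUV : vecMulVec q q - vecMulVec s s = (of ![q, s])ᵀ * of ![q, -s] := by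
    ext a b
    simp [mul_apply, vecMulVec_apply, Fin.sum_univ_two, sub_eq_add_neg]
  have hVU : of ![q, -s] * A⁻¹ * (of ![q, s])ᵀ =
      of fun t t' => ![q, -s] t ⬝ᵥ A⁻¹ *ᵥ ![q, s] t' := by
    ext t t'
    rw [Matrix.mul_assoc, mul_apply, of_apply, dotProduct]
    rfl
  rw [add_sub_assoc, hUV, det_add_mul _ _ hA, hVU, det_fin_two]
  simp [neg_dotProduct, sub_eq_add_neg]

theorem dotProduct_inv_mulVec_comm_of_isSymm {A : Matrix m m α} (hA : A.IsSymm) (q s : m → α) :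
    q ⬝ᵥ A⁻¹ *ᵥ s = s ⬝ᵥ A⁻¹ *ᵥ q := by
  rw [dotProduct_mulVec, ← mulVec_transpose, hA.inv.eq, dotProduct_comm]

theorem pinv_mulVec_apply (S : Matrix m n α) (q : m → α) (j : n) :
    ((Sᵀ * (S * Sᵀ)⁻¹) *ᵥ q) j = Sᵀ j ⬝ᵥ (S * Sᵀ)⁻¹ *ᵥ q := by
  rw [← mulVec_mulVec]
  rfl

theorem pinv_mulVec_dotProduct_self (S : Matrix m n α) (hS : IsUnit (S * Sᵀ).det) (q : m → α) :
    ((Sᵀ * (S * Sᵀ)⁻¹) *ᵥ q) ⬝ᵥ ((Sᵀ * (S * Sᵀ)⁻¹) *ᵥ q) = q ⬝ᵥ (S * Sᵀ)⁻¹ *ᵥ q := by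
  rw [← mulVec_mulVec, mulVec_transpose, ← dotProduct_mulVec, ← mulVec_transpose, mulVec_mulVec,
    mulVec_mulVec, mul_nonsing_inv _ hS, one_mulVec, dotProduct_comm]

theorem sum_col_dotProduct_inv_mulVec_col (S : Matrix m n α) (hS : IsUnit (S * Sᵀ).det) :
    ∑ j, Sᵀ j ⬝ᵥ (S * Sᵀ)⁻¹ *ᵥ Sᵀ j = Fintype.card m := by
  change trace (Sᵀ * ((S * Sᵀ)⁻¹ * S)) = _
  rw [trace_mul_comm, Matrix.mul_assoc, nonsing_inv_mul _ hS, trace_one]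

end CommRing

section Real

variable {m n : Type*} [Fintype m] [DecidableEq m] [Fintype n]

theorem det_mul_transpose_pos (S : Matrix m n ℝ) (hS : IsUnit (S * Sᵀ).det) : 0 < (S * Sᵀ).det := by
  have hpsd : (S * Sᵀ).PosSemidef := by
    simpa [conjTranspose_eq_transpose_of_trivial] using posSemidef_self_mul_conjTranspose S
  exact hpsd.det_nonneg.lt_of_ne' hS.ne_zero

variable [DecidableEq n]

theorem sq_dotProduct_le_of_det_updateCol_le (S : Matrix m n ℝ) (hS : IsUnit (S * Sᵀ).det)
    (q : m → ℝ) (j : n)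
    (hdom : (S.updateCol j q * (S.updateCol j q)ᵀ).det ≤ (S * Sᵀ).det) :
    (Sᵀ j ⬝ᵥ (S * Sᵀ)⁻¹ *ᵥ q) ^ 2 ≤
      (Sᵀ j ⬝ᵥ (S * Sᵀ)⁻¹ *ᵥ Sᵀ j) * (1 + q ⬝ᵥ (S * Sᵀ)⁻¹ *ᵥ q) - q ⬝ᵥ (S * Sᵀ)⁻¹ *ᵥ q := by
  rw [updateCol_mul_transpose_updateCol, det_add_vecMulVec_sub_vecMulVec hS,
    dotProduct_inv_mulVec_comm_of_isSymm (transpose_mul S Sᵀ) q (Sᵀ j)] at hdom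
  have := le_of_mul_le_mul_left (hdom.trans_eq (mul_one _).symm) (det_mul_transpose_pos S hS)
  linear_combination this

theorem pinv_mulVec_dotProduct_self_le (S : Matrix m n ℝ) (hS : IsUnit (S * Sᵀ).det)
    (hcard : 2 * Fintype.card m ≤ Fintype.card n) (q : m → ℝ)
    (hdom : ∀ j, (S.updateCol j q * (S.updateCol j q)ᵀ).det ≤ (S * Sᵀ).det) :
    ((Sᵀ * (S * Sᵀ)⁻¹) *ᵥ q) ⬝ᵥ ((Sᵀ * (S * Sᵀ)⁻¹) *ᵥ q) ≤
      Fintype.card m / (Fintype.card m + 1) := by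
  set α := q ⬝ᵥ (S * Sᵀ)⁻¹ *ᵥ q
  have hα : ((Sᵀ * (S * Sᵀ)⁻¹) *ᵥ q) ⬝ᵥ ((Sᵀ * (S * Sᵀ)⁻¹) *ᵥ q) = α :=
    pinv_mulVec_dotProduct_self S hS q
  have hsum : α ≤ Fintype.card m * (1 + α) - Fintype.card n * α :=
    calc α = ∑ j, (Sᵀ j ⬝ᵥ (S * Sᵀ)⁻¹ *ᵥ q) ^ 2 := by
          simp only [← hα, dotProduct, pinv_mulVec_apply, sq]
      _ ≤ ∑ j, ((Sᵀ j ⬝ᵥ (S * Sᵀ)⁻¹ *ᵥ Sᵀ j) * (1 + α) - α) :=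
          Finset.sum_le_sum fun j _ => sq_dotProduct_le_of_det_updateCol_le S hS q j (hdom j)
      _ = Fintype.card m * (1 + α) - Fintype.card n * α := by
          rw [Finset.sum_sub_distrib, ← Finset.sum_mul, sum_col_dotProduct_inv_mulVec_col S hS]
          simp [nsmul_eq_mul]
  have hα0 : 0 ≤ α := hα ▸ dotProduct_self_star_nonneg _
  have hcard' : (2 * Fintype.card m : ℝ) ≤ Fintype.card n := by exact_mod_cast hcard
  rw [hα, le_div_iff₀ (by positivity)]
  nlinarith

end Real

end Matrix

theorem norm_leastNormCoef_lt_one_of_dominant_general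
    (f m L₀ : ℕ) (hfL : 2 * f ≤ L₀)
    (Q : Matrix (Fin f) (Fin m) ℝ)
    (S : Matrix (Fin f) (Fin L₀) ℝ)
    (hinv : IsUnit (S * Sᵀ))
    (hdom : ∀ (i : Fin m) (j : Fin L₀),
      ((S.updateCol j (fun a => Q a i)) * (S.updateCol j (fun a => Q a i))ᵀ).det
        ≤ (S * Sᵀ).det)
    (i : Fin m)
    (c : Fin L₀ → ℝ) (hc : c = (Sᵀ * (S * Sᵀ)⁻¹).mulVec (fun a => Q a i)) :
    Real.sqrt (∑ j, c j ^ 2) ≤ Real.sqrt ((f : ℝ) / ((f : ℝ) + 1)) ∧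
      Real.sqrt ((f : ℝ) / ((f : ℝ) + 1)) < 1 := by
  have hc2 : ∑ j, c j ^ 2 ≤ (f : ℝ) / (f + 1) := by
    have := pinv_mulVec_dotProduct_self_le S ((isUnit_iff_isUnit_det _).mp hinv)
      (by simpa using hfL) _ (hdom i)
    simpa [hc, dotProduct, sq] using this
  have hf : (f : ℝ) / (f + 1) < 1 := (div_lt_one (by positivity)).mpr (lt_add_one _)
  exact ⟨Real.sqrt_le_sqrt hc2, (Real.sqrt_lt' one_pos).mpr (by rwa [one_pow])⟩

/-- If the dominant seed set is of size `L₀ ≥ 2f`, every least-norm coefficient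
vector of a column outside the seed set has Euclidean norm at most
`√(f/(f+1)) < 1`. -/
theorem norm_leastNormCoef_lt_one_of_dominant
    (f m L₀ : ℕ) (hfL : 2 * f ≤ L₀) (hLm : L₀ ≤ m)
    (Q : Matrix (Fin f) (Fin m) ℝ) (hQ : Q.rank = f)
    (k : Fin L₀ → Fin m) (hk : Function.Injective k)
    (S : Matrix (Fin f) (Fin L₀) ℝ) (hS : S = Q.submatrix id k)
    (hinv : IsUnit (S * Sᵀ))
    (hdom : ∀ (i : Fin m) (j : Fin L₀),
      ((S.updateCol j (fun a => Q a i)) * (S.updateCol j (fun a => Q a i))ᵀ).det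
        ≤ (S * Sᵀ).det)
    (i : Fin m) (hi : i ∉ Set.range k)
    (c : Fin L₀ → ℝ) (hc : c = (Sᵀ * (S * Sᵀ)⁻¹).mulVec (fun a => Q a i)) :
    Real.sqrt (∑ j, c j ^ 2) ≤ Real.sqrt ((f : ℝ) / ((f : ℝ) + 1)) ∧
      Real.sqrt ((f : ℝ) / ((f : ℝ) + 1)) < 1 :=
  norm_leastNormCoef_lt_one_of_dominant_general f m L₀ hfL Q S hinv hdom i c hc
end

section
/- Let S be a real f×L matrix with f ≤ L such that S Sᵀ is invertible, and let c ∈ ℝ^L lie in the column space of Sᵀ. Let [S, Sc] be the f×(L+1) matrix appending column Sc to S, and let [I_L, c] be the L×(L+1) matrix appending column c to the identity. Then [S, Sc] has full row rank and its right pseudoinverse factors as [S, Sc]† = [I_L, c]† S†, where M† = Mᵀ(M Mᵀ)⁻¹ denotes the right pseudoinverse of a full-row-rank matrix M. -/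
/-!
Writing `[S, Sc] = S M` with `M = [I_L, c]`, the identity `(SM)† = M† S†` holds as soon as
`M Mᵀ = I + c cᵀ` maps the column space of `Sᵀ` into itself, which is exactly what `c ∈ col Sᵀ`
gives: `(I + c cᵀ) Sᵀ = Sᵀ (I + y (Sc)ᵀ)` for `c = Sᵀ y`. Positive definiteness of `I + c cᵀ`
makes `S M Mᵀ Sᵀ` positive definite, hence invertible, which also yields the rank of `[S, Sc]`.
-/

open Matrix

namespace Matrix

variable {l n R : Type*} {k : ℕ}

/-- `[A, b]` -/
def appendCol (A : Matrix n (Fin k) R) (b : n → R) : Matrix n (Fin (k + 1)) R :=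
  of fun a j => Fin.lastCases (b a) (fun j => A a j) j

section CommSemiring

variable [CommSemiring R]

theorem mul_appendCol [Fintype n] (A : Matrix l n R) (B : Matrix n (Fin k) R) (b : n → R) :
    A * appendCol B b = appendCol (A * B) (A *ᵥ b) := by
  ext a j
  refine Fin.lastCases ?_ (fun j => ?_) j <;> simp [appendCol, mul_apply, mulVec, dotProduct]

theorem appendCol_mul_transpose (B : Matrix n (Fin k) R) (b : n → R) :
    appendCol B b * (appendCol B b)ᵀ = B * Bᵀ + vecMulVec b b := by
  ext a a'
  simp [appendCol, mul_apply, Fin.sum_univ_castSucc, vecMulVec_apply, add_comm]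

end CommSemiring

section Pseudoinverse

variable {m p : Type*} [Fintype m] [Fintype n] [Fintype p] [DecidableEq m] [DecidableEq n]
  [CommRing R]

/-- `M†`; a junk value unless `M Mᵀ` is invertible. -/
noncomputable def rightPinv (M : Matrix m p R) : Matrix p m R :=
  Mᵀ * (M * Mᵀ)⁻¹

theorem rightPinv_mul (A : Matrix m n R) (B : Matrix n p R) (hA : IsUnit (A * Aᵀ))
    (hB : IsUnit (B * Bᵀ)) (hAB : IsUnit (A * B * (A * B)ᵀ))
    (hinvariant : ∃ K : Matrix m m R, B * Bᵀ * Aᵀ = Aᵀ * K) :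
    rightPinv (A * B) = rightPinv B * rightPinv A := by
  obtain ⟨K, hK⟩ := hinvariant
  have hA' := (isUnit_iff_isUnit_det _).mp hA
  have hB' := (isUnit_iff_isUnit_det _).mp hB
  have hAB' := (isUnit_iff_isUnit_det _).mp hAB
  have hleft : rightPinv B * rightPinv A * (A * B * (A * B)ᵀ) = (A * B)ᵀ :=
    calc rightPinv B * rightPinv A * (A * B * (A * B)ᵀ)
        = Bᵀ * (B * Bᵀ)⁻¹ * Aᵀ * (A * Aᵀ)⁻¹ * (A * (B * Bᵀ * Aᵀ)) := by
          simp only [rightPinv, transpose_mul, Matrix.mul_assoc]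
      _ = Bᵀ * (B * Bᵀ)⁻¹ * (Aᵀ * K) := by
          rw [hK, ← Matrix.mul_assoc A, ← Matrix.mul_assoc, nonsing_inv_mul_cancel_right _ _ hA',
            Matrix.mul_assoc]
      _ = Bᵀ * Aᵀ := by
          rw [← hK, ← Matrix.mul_assoc, Matrix.mul_assoc Bᵀ, nonsing_inv_mul _ hB',
            Matrix.mul_one]
      _ = (A * B)ᵀ := (transpose_mul A B).symm
  conv_rhs => rw [← mul_nonsing_inv_cancel_right _ (rightPinv B * rightPinv A) hAB']
  rw [hleft, rightPinv]

end Pseudoinverse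

theorem injective_vecMul_of_isUnit_mul_transpose {m : Type*} [Fintype m] [Fintype n]
    [DecidableEq m] [Field R] {A : Matrix m n R} (hA : IsUnit (A * Aᵀ)) :
    Function.Injective A.vecMul := by
  intro x x' h
  apply vecMul_injective_iff_isUnit.mpr hA
  simp only [← vecMul_vecMul, h]

end Matrix

theorem pseudoinverse_append_col_factors_general
    (f L : ℕ)
    (S : Matrix (Fin f) (Fin L) ℝ) (hinv : IsUnit (S * Sᵀ))
    (c : Fin L → ℝ) (hc : ∃ y : Fin f → ℝ, c = Sᵀ.mulVec y)
    (T : Matrix (Fin f) (Fin (L + 1)) ℝ)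
    (hT : T = Matrix.of fun a b => Fin.lastCases (S.mulVec c a) (fun j => S a j) b)
    (M : Matrix (Fin L) (Fin (L + 1)) ℝ)
    (hM : M = Matrix.of fun a b =>
      Fin.lastCases (c a) (fun j => (1 : Matrix (Fin L) (Fin L) ℝ) a j) b) :
    T.rank = f ∧
      Tᵀ * (T * Tᵀ)⁻¹ = (Mᵀ * (M * Mᵀ)⁻¹) * (Sᵀ * (S * Sᵀ)⁻¹) := by
  obtain ⟨y, hy⟩ := hc
  have hTM : T = S * M := by
    subst hT hM
    change appendCol S (S *ᵥ c) = S * appendCol 1 c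
    rw [mul_appendCol, Matrix.mul_one]
  have hMM : M * Mᵀ = 1 + vecMulVec c c := by
    subst hM
    change appendCol 1 c * (appendCol 1 c)ᵀ = _
    rw [appendCol_mul_transpose, transpose_one, Matrix.mul_one]
  have hMM_posDef : (M * Mᵀ).PosDef :=
    hMM ▸ PosDef.one.add_posSemidef (posSemidef_vecMulVec_self_star c)
  have hTT_posDef : (T * Tᵀ).PosDef := by
    rw [hTM, transpose_mul, ← Matrix.mul_assoc, Matrix.mul_assoc S]
    simpa using
      hMM_posDef.mul_mul_conjTranspose_same (injective_vecMul_of_isUnit_mul_transpose hinv)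
  have hinvariant : M * Mᵀ * Sᵀ = Sᵀ * (1 + vecMulVec y (S *ᵥ c)) := by
    rw [hMM, Matrix.add_mul, vecMulVec_mul, vecMul_transpose, Matrix.mul_add, mul_vecMulVec, ← hy]
    simp only [Matrix.one_mul, Matrix.mul_one]
  refine ⟨?_, ?_⟩
  · rw [← rank_self_mul_transpose, rank_of_isUnit _ hTT_posDef.isUnit, Fintype.card_fin]
  · subst hTM
    exact rightPinv_mul S M hinv hMM_posDef.isUnit hTT_posDef.isUnit ⟨_, hinvariant⟩

/-- For `c` in the column space of `Sᵀ`, the matrix `[S, Sc]` has full row rank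
and its right pseudoinverse factors as `[S, Sc]† = [I_L, c]† S†`. -/
theorem pseudoinverse_append_col_factors
    (f L : ℕ) (hfL : f ≤ L)
    (S : Matrix (Fin f) (Fin L) ℝ) (hrank : S.rank = f) (hinv : IsUnit (S * Sᵀ))
    (c : Fin L → ℝ) (hc : ∃ y : Fin f → ℝ, c = Sᵀ.mulVec y)
    (T : Matrix (Fin f) (Fin (L + 1)) ℝ)
    (hT : T = Matrix.of fun a b => Fin.lastCases (S.mulVec c a) (fun j => S a j) b)
    (M : Matrix (Fin L) (Fin (L + 1)) ℝ)
    (hM : M = Matrix.of fun a b =>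
      Fin.lastCases (c a) (fun j => (1 : Matrix (Fin L) (Fin L) ℝ) a j) b) :
    T.rank = f ∧
      Tᵀ * (T * Tᵀ)⁻¹ = (Mᵀ * (M * Mᵀ)⁻¹) * (Sᵀ * (S * Sᵀ)⁻¹) :=
  pseudoinverse_append_col_factors_general f L S hinv c hc T hT M hM
end
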